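/- arXiv:2201.02054 — 2 statements merged into one kernel-verified Lean document; each statement's English description precedes it below -/
import Mathlib

section
/- There exists a metric instance of the many-visits multiple TSP where the optimal cost with tours allowed to overlap (P1, resp. P5) is strictly smaller than the optimal cost with vertex-disjoint tours required (P2, resp. P6). In particular, P1 ≢ P2 and P5 ≢ P6 as optimization problems. -/
open Finset

noncomputable section

variable {V : Type*}

/-- Degree of `v` in a multigraph given by a multiset of (possibly diagonal) `Sym2` edges;
self-loops count twice. -/
def mdeg [DecidableEq V] (E : Multiset (Sym2 V)) (v : V) : ℕ :=
  (E.map (Sym2.lift ⟨fun a b => (if a = v then 1 else 0) + (if b = v then 1 else 0),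
    fun _ _ => add_comm _ _⟩)).sum

/-- Cost of a multigraph: multiplicity-weighted sum of (symmetrized) edge costs. -/
def mcost (c : V → V → ℝ) (E : Multiset (Sym2 V)) : ℝ :=
  (E.map (Sym2.lift ⟨fun a b => (c a b + c b a) / 2, fun _ _ => by ring⟩)).sum

/-- The edge multiset of the closed walk visiting the vertices of `w` in cyclic order.
A singleton list yields one self-loop. -/
def walkEdges (w : List V) : Multiset (Sym2 V) :=
  (((w.zip (w.rotate 1)).map (fun p => Sym2.mk p.1 p.2) : List (Sym2 V)) : Multiset (Sym2 V))

/-- Connectivity of a multigraph on its support. -/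
def connOn [DecidableEq V] (E : Multiset (Sym2 V)) : Prop :=
  ∀ u v, 0 < mdeg E u → 0 < mdeg E v →
    Relation.ReflTransGen (fun a b => s(a, b) ∈ E) u v

/-- Unrestricted MV-mTSP⁺ with arbitrary tours: edge multiset partitions into exactly `m`
non-empty closed walks, visiting each vertex `v` exactly `r v` times in total. -/
def feasP1 [Fintype V] [DecidableEq V] (r : V → ℕ) (m : ℕ) (E : Multiset (Sym2 V)) : Prop :=
  ∃ ws : Fin m → List V, (∀ i, ws i ≠ []) ∧ E = ∑ i, walkEdges (ws i) ∧
    ∀ v, (∑ i, (ws i).count v) = r v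

/-- Unrestricted MV-mTSP⁺ with disjoint tours. -/
def feasP2 [Fintype V] [DecidableEq V] (r : V → ℕ) (m : ℕ) (E : Multiset (Sym2 V)) : Prop :=
  ∃ ws : Fin m → List V, (∀ i, ws i ≠ []) ∧ E = ∑ i, walkEdges (ws i) ∧
    (∀ v, (∑ i, (ws i).count v) = r v) ∧
    ∀ i j, i ≠ j → ∀ v, v ∈ ws i → v ∉ ws j

/-- Unrestricted MV-mTSP₀ with arbitrary tours: at most `m` closed walks. -/
def feasP3 [Fintype V] [DecidableEq V] (r : V → ℕ) (m : ℕ) (E : Multiset (Sym2 V)) : Prop :=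
  ∃ k, k ≤ m ∧ ∃ ws : Fin k → List V, (∀ i, ws i ≠ []) ∧ E = ∑ i, walkEdges (ws i) ∧
    ∀ v, (∑ i, (ws i).count v) = r v

/-- Unrestricted MV-mTSP₀ with disjoint tours. -/
def feasP4 [Fintype V] [DecidableEq V] (r : V → ℕ) (m : ℕ) (E : Multiset (Sym2 V)) : Prop :=
  ∃ k, k ≤ m ∧ ∃ ws : Fin k → List V, (∀ i, ws i ≠ []) ∧ E = ∑ i, walkEdges (ws i) ∧
    (∀ v, (∑ i, (ws i).count v) = r v) ∧
    ∀ i j, i ≠ j → ∀ v, v ∈ ws i → v ∉ ws j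

/-- MV-mTSP⁺ with depots and arbitrary tours: exactly `m` tours, each containing exactly one
depot and at least one city; distinct tours use distinct depots; each city `v` is visited
`r v` times in total. -/
def feasP5 [Fintype V] [DecidableEq V] (D : Finset V) (r : V → ℕ) (m : ℕ)
    (E : Multiset (Sym2 V)) : Prop :=
  ∃ ws : Fin m → List V,
    (∀ i, (∃ d ∈ D, d ∈ ws i) ∧ (∃ v ∈ ws i, v ∉ D) ∧
      (∀ d ∈ D, ∀ d' ∈ D, d ∈ ws i → d' ∈ ws i → d = d')) ∧
    (∀ d ∈ D, ∀ i j, d ∈ ws i → d ∈ ws j → i = j) ∧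
    E = ∑ i, walkEdges (ws i) ∧
    ∀ v, v ∉ D → (∑ i, (ws i).count v) = r v

/-- MV-mTSP⁺ with depots and disjoint tours. -/
def feasP6 [Fintype V] [DecidableEq V] (D : Finset V) (r : V → ℕ) (m : ℕ)
    (E : Multiset (Sym2 V)) : Prop :=
  ∃ ws : Fin m → List V,
    (∀ i, (∃ d ∈ D, d ∈ ws i) ∧ (∃ v ∈ ws i, v ∉ D) ∧
      (∀ d ∈ D, ∀ d' ∈ D, d ∈ ws i → d' ∈ ws i → d = d')) ∧
    (∀ d ∈ D, ∀ i j, d ∈ ws i → d ∈ ws j → i = j) ∧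
    E = ∑ i, walkEdges (ws i) ∧
    (∀ v, v ∉ D → (∑ i, (ws i).count v) = r v) ∧
    ∀ i j, i ≠ j → ∀ v, v ∈ ws i → v ∉ ws j

/-- MV-mTSP₀ with depots and arbitrary tours: at most `m` tours. -/
def feasP7 [Fintype V] [DecidableEq V] (D : Finset V) (r : V → ℕ) (m : ℕ)
    (E : Multiset (Sym2 V)) : Prop :=
  ∃ k, k ≤ m ∧ ∃ ws : Fin k → List V,
    (∀ i, (∃ d ∈ D, d ∈ ws i) ∧ (∃ v ∈ ws i, v ∉ D) ∧
      (∀ d ∈ D, ∀ d' ∈ D, d ∈ ws i → d' ∈ ws i → d = d')) ∧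
    (∀ d ∈ D, ∀ i j, d ∈ ws i → d ∈ ws j → i = j) ∧
    E = ∑ i, walkEdges (ws i) ∧
    ∀ v, v ∉ D → (∑ i, (ws i).count v) = r v

/-- MV-mTSP₀ with depots and disjoint tours. -/
def feasP8 [Fintype V] [DecidableEq V] (D : Finset V) (r : V → ℕ) (m : ℕ)
    (E : Multiset (Sym2 V)) : Prop :=
  ∃ k, k ≤ m ∧ ∃ ws : Fin k → List V,
    (∀ i, (∃ d ∈ D, d ∈ ws i) ∧ (∃ v ∈ ws i, v ∉ D) ∧
      (∀ d ∈ D, ∀ d' ∈ D, d ∈ ws i → d' ∈ ws i → d = d')) ∧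
    (∀ d ∈ D, ∀ i j, d ∈ ws i → d ∈ ws j → i = j) ∧
    E = ∑ i, walkEdges (ws i) ∧
    (∀ v, v ∉ D → (∑ i, (ws i).count v) = r v) ∧
    ∀ i j, i ≠ j → ∀ v, v ∈ ws i → v ∉ ws j

namespace OverlapAux

/-- The uniform metric on `Fin 4`: distance 1 between distinct points, self-loops cost 2. -/
def cU : Fin 4 → Fin 4 → ℝ := fun u v => if u = v then 2 else 1

lemma cU_lift (a b : Fin 4) :
    Sym2.lift ⟨fun a b => (cU a b + cU b a) / 2, fun _ _ => by ring⟩ s(a,b)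
      = if a = b then 2 else 1 := by
  simp only [Sym2.lift_mk, cU]
  by_cases h : a = b <;> simp [h, eq_comm]

lemma mcost_add {V : Type*} (c : V → V → ℝ) (A B : Multiset (Sym2 V)) :
    mcost c (A + B) = mcost c A + mcost c B := by
  simp [mcost]

lemma mcost_ge_card (E : Multiset (Sym2 (Fin 4))) : (E.card : ℝ) ≤ mcost cU E := by
  have := Multiset.card_nsmul_le_sum
    (s := E.map (Sym2.lift ⟨fun a b => (cU a b + cU b a) / 2, fun _ _ => by ring⟩))
    (a := (1:ℝ)) ?_
  · simpa [mcost] using this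
  · intro x hx
    obtain ⟨e, he, rfl⟩ := Multiset.mem_map.mp hx
    induction e using Sym2.ind with
    | _ a b => rw [cU_lift]; split <;> norm_num

lemma mcost_nonneg (E : Multiset (Sym2 (Fin 4))) : 0 ≤ mcost cU E :=
  le_trans (by positivity) (mcost_ge_card E)

lemma mcost_ge_card_add_one (E : Multiset (Sym2 (Fin 4))) (x : Fin 4)
    (h : s(x,x) ∈ E) : (E.card : ℝ) + 1 ≤ mcost cU E := by
  obtain ⟨E', rfl⟩ : ∃ E', E = s(x,x) ::ₘ E' := ⟨E.erase s(x,x), (Multiset.cons_erase h).symm⟩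
  have h1 : mcost cU (s(x,x) ::ₘ E') = 2 + mcost cU E' := by
    simp [mcost, cU_lift, cU]
  have := mcost_ge_card E'
  rw [h1]
  simp only [Multiset.card_cons]
  push_cast
  linarith

lemma walkEdges_card {V : Type*} (w : List V) : (walkEdges w).card = w.length := by
  simp [walkEdges]

lemma length_eq_sum_count (l : List (Fin 4)) : l.length = ∑ v, l.count v := by
  induction l with
  | nil => simp
  | cons a l ih => simp [List.count_cons, ih, Finset.sum_add_distrib]

lemma count_pair_le_length (l : List (Fin 4)) (a b : Fin 4) (h : a ≠ b) :
    l.count a + l.count b ≤ l.length := by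
  calc l.count a + l.count b = ∑ v ∈ ({a, b} : Finset (Fin 4)), l.count v :=
        (Finset.sum_pair (f := fun v => l.count v) h).symm
    _ ≤ ∑ v, l.count v := Finset.sum_le_sum_of_subset (Finset.subset_univ _)
    _ = l.length := (length_eq_sum_count l).symm

lemma loop_of_len1 {V : Type*} (v : V) : s(v,v) ∈ walkEdges [v] := by
  simp [walkEdges]

lemma loop_of_len2 (w : List (Fin 4)) (x : Fin 4) (hl : w.length = 2)
    (hc : w.count x = 2) : s(x,x) ∈ walkEdges w := by
  obtain ⟨a, b, rfl⟩ := List.length_eq_two.mp hl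
  have : a = x ∧ b = x := by
    simp [List.count_cons] at hc
    by_cases h1 : a = x <;> by_cases h2 : b = x <;> simp [h1, h2] at hc ⊢
  obtain ⟨rfl, rfl⟩ := this
  simp [walkEdges, List.rotate]

lemma loop_of_len3 (w : List (Fin 4)) (x : Fin 4) (hl : w.length = 3)
    (hc : w.count x = 2) : s(x,x) ∈ walkEdges w := by
  obtain ⟨a, b, c, rfl⟩ := List.length_eq_three.mp hl
  have hrot : ([a,b,c] : List (Fin 4)).rotate 1 = [b,c,a] := by
    simp [List.rotate]
  have hw : walkEdges [a,b,c] = {s(a,b), s(b,c), s(c,a)} := by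
    simp [walkEdges, hrot]
    rfl
  rw [hw]
  by_cases h1 : a = x <;> by_cases h2 : b = x <;> by_cases h3 : c = x <;>
    simp [List.count_cons, h1, h2, h3] at hc ⊢ <;>
    first
      | (subst h1; subst h2; simp)
      | (subst h2; subst h3; simp)
      | (subst h1; subst h3; simp)
      | omega

/-- Lower bound for instance 1 with disjoint tours: the tour avoiding `0` together with the
tour containing both visits of `0` must create a self-loop or extra length. -/
lemma helper1 (a b : List (Fin 4)) (hbne : b ≠ [])
    (hA : a.count 0 = 2) (hB : b.count 0 = 0)
    (hsum : ∀ v : Fin 4, a.count v + b.count v = if v = 0 then 2 else 1) :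
    (6:ℝ) ≤ mcost cU (walkEdges a + walkEdges b) := by
  have h0 := hsum 0; have h1 := hsum 1; have h2 := hsum 2; have h3 := hsum 3
  rw [if_pos rfl] at h0
  rw [if_neg (by decide)] at h1
  rw [if_neg (by decide)] at h2
  rw [if_neg (by decide)] at h3
  have hla : a.length = ∑ v, a.count v := length_eq_sum_count a
  have hlb : b.length = ∑ v, b.count v := length_eq_sum_count b
  rw [Fin.sum_univ_four] at hla hlb
  have hab : a.length + b.length = 5 := by omega
  have hble : b.length ≤ 3 := by omega
  have hbge : 1 ≤ b.length := List.length_pos_iff.mpr hbne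
  rw [mcost_add]
  have hca := mcost_ge_card (walkEdges a)
  have hcb := mcost_ge_card (walkEdges b)
  rw [walkEdges_card] at hca hcb
  have : b.length = 1 ∨ b.length = 2 ∨ b.length = 3 := by omega
  rcases this with h | h | h
  · -- b is a single vertex: self-loop in b
    obtain ⟨v, rfl⟩ := List.length_eq_one_iff.mp h
    have hloop := mcost_ge_card_add_one (walkEdges [v]) v (loop_of_len1 v)
    rw [walkEdges_card] at hloop
    have ha4 : a.length = 4 := by omega
    rw [ha4] at hca
    simp only [List.length_singleton] at hloop
    push_cast at hca hloop ⊢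
    linarith
  · -- a has length 3 with two 0's: self-loop in a
    have ha3 : a.length = 3 := by omega
    have hloop := mcost_ge_card_add_one (walkEdges a) 0 (loop_of_len3 a 0 ha3 hA)
    rw [walkEdges_card, ha3] at hloop
    rw [h] at hcb
    push_cast at hloop hcb ⊢
    linarith
  · -- a = [0,0]: self-loop in a
    have ha2 : a.length = 2 := by omega
    have hloop := mcost_ge_card_add_one (walkEdges a) 0 (loop_of_len2 a 0 ha2 hA)
    rw [walkEdges_card, ha2] at hloop
    rw [h] at hcb
    push_cast at hloop hcb ⊢
    linarith

/-- Lower bound for instance 2 with disjoint tours. -/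
lemma helper2 (a b : List (Fin 4)) (hA : a.count 2 = 2)
    (d : Fin 4) (hd2 : d ≠ 2) (hda : d ∈ a)
    (u v : Fin 4) (huv : u ≠ v) (hub : u ∈ b) (hvb : v ∈ b) :
    (6:ℝ) ≤ mcost cU (walkEdges a + walkEdges b) := by
  have hla : 3 ≤ a.length := by
    have := count_pair_le_length a 2 d (Ne.symm hd2)
    have := List.count_pos_iff.mpr hda
    omega
  have hlb : 2 ≤ b.length := by
    have := count_pair_le_length b u v huv
    have := List.count_pos_iff.mpr hub
    have := List.count_pos_iff.mpr hvb
    omega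
  rw [mcost_add]
  have hcb := mcost_ge_card (walkEdges b)
  rw [walkEdges_card] at hcb
  have hma : (4:ℝ) ≤ mcost cU (walkEdges a) := by
    by_cases h3 : a.length = 3
    · have hloop := mcost_ge_card_add_one (walkEdges a) 2 (loop_of_len3 a 2 h3 hA)
      rw [walkEdges_card, h3] at hloop
      push_cast at hloop
      linarith
    · have hca := mcost_ge_card (walkEdges a)
      rw [walkEdges_card] at hca
      have : 4 ≤ a.length := by omega
      have : (4:ℝ) ≤ (a.length : ℝ) := by exact_mod_cast this
      linarith
  have : (2:ℝ) ≤ (b.length : ℝ) := by exact_mod_cast hlb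
  linarith

end OverlapAux

open OverlapAux in
set_option maxHeartbeats 1000000 in
/-- There exist metric instances where allowing tours to overlap is strictly
cheaper than requiring vertex-disjoint tours, both without depots (P1 vs. P2) and with
depots (P5 vs. P6). -/
theorem overlap_strictly_beats_disjoint :
    (∃ (n m : ℕ) (c : Fin n → Fin n → ℝ) (r : Fin n → ℕ),
      (∀ u v, c u v = c v u) ∧ (∀ u v, 0 ≤ c u v) ∧
      (∀ u v w, c u w ≤ c u v + c v w) ∧
      (∀ v u, u ≠ v → c v v ≤ 2 * c u v) ∧ (∀ v, 1 ≤ r v) ∧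
      {x : ℝ | ∃ E, feasP2 r m E ∧ mcost c E = x}.Nonempty ∧
      sInf {x : ℝ | ∃ E, feasP1 r m E ∧ mcost c E = x} <
        sInf {x : ℝ | ∃ E, feasP2 r m E ∧ mcost c E = x}) ∧
    (∃ (n m : ℕ) (c : Fin n → Fin n → ℝ) (D : Finset (Fin n)) (r : Fin n → ℕ),
      D.card = m ∧
      (∀ u v, c u v = c v u) ∧ (∀ u v, 0 ≤ c u v) ∧
      (∀ u v w, c u w ≤ c u v + c v w) ∧
      (∀ v u, u ≠ v → c v v ≤ 2 * c u v) ∧ (∀ v, 1 ≤ r v) ∧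
      {x : ℝ | ∃ E, feasP6 D r m E ∧ mcost c E = x}.Nonempty ∧
      sInf {x : ℝ | ∃ E, feasP5 D r m E ∧ mcost c E = x} <
        sInf {x : ℝ | ∃ E, feasP6 D r m E ∧ mcost c E = x}) := by
  have hsymm : ∀ u v : Fin 4, cU u v = cU v u := by
    intro u v; simp only [cU]; by_cases h : u = v <;> simp [h, eq_comm]
  have hnn : ∀ u v : Fin 4, 0 ≤ cU u v := by
    intro u v; simp only [cU]; split <;> norm_num
  have htri : ∀ u v w : Fin 4, cU u w ≤ cU u v + cU v w := by
    intro u v w; simp only [cU]; split_ifs <;> norm_num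
  have hloopc : ∀ v u : Fin 4, u ≠ v → cU v v ≤ 2 * cU u v := by
    intro v u h; simp only [cU, if_pos rfl, if_neg h]; norm_num
  constructor
  · -- P1 vs P2
    refine ⟨4, 2, cU, fun v => if v = 0 then 2 else 1, hsymm, hnn, htri, hloopc,
      fun v => by dsimp only; split <;> norm_num, ?_, ?_⟩
    · -- P2 feasible set nonempty
      refine ⟨mcost cU (∑ i, walkEdges ((![[0,1,0,2],[3]] : Fin 2 → List (Fin 4)) i)),
        _, ⟨![[0,1,0,2],[3]], by decide, rfl, by decide, by decide⟩, rfl⟩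
    · -- sInf P1 ≤ 5 < 6 ≤ sInf P2
      have hbdd : BddBelow {x : ℝ | ∃ E, feasP1 (fun v : Fin 4 => if v = 0 then 2 else 1) 2 E
          ∧ mcost cU E = x} := by
        refine ⟨0, fun x hx => ?_⟩
        obtain ⟨E, _, rfl⟩ := hx
        exact mcost_nonneg E
      have h5 : (5:ℝ) ∈ {x : ℝ | ∃ E, feasP1 (fun v : Fin 4 => if v = 0 then 2 else 1) 2 E
          ∧ mcost cU E = x} := by
        refine ⟨∑ i, walkEdges ((![[0,1,2],[0,3]] : Fin 2 → List (Fin 4)) i),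
          ⟨![[0,1,2],[0,3]], by decide, rfl, by decide⟩, ?_⟩
        rw [Fin.sum_univ_two]
        show mcost cU (({s(0,1), s(1,2), s(2,0)} : Multiset (Sym2 (Fin 4)))
          + ({s(0,3), s(3,0)} : Multiset (Sym2 (Fin 4)))) = 5
        simp [mcost, cU]
        norm_num
      have hne2 : {x : ℝ | ∃ E, feasP2 (fun v : Fin 4 => if v = 0 then 2 else 1) 2 E
          ∧ mcost cU E = x}.Nonempty :=
        ⟨mcost cU (∑ i, walkEdges ((![[0,1,0,2],[3]] : Fin 2 → List (Fin 4)) i)),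
          _, ⟨![[0,1,0,2],[3]], by decide, rfl, by decide, by decide⟩, rfl⟩
      have hlow : ∀ x ∈ {x : ℝ | ∃ E, feasP2 (fun v : Fin 4 => if v = 0 then 2 else 1) 2 E
          ∧ mcost cU E = x}, (6:ℝ) ≤ x := by
        rintro x ⟨E, ⟨ws, hne, rfl, hcnt, hdisj⟩, rfl⟩
        rw [Fin.sum_univ_two]
        have hcnt' : ∀ v : Fin 4, (ws 0).count v + (ws 1).count v
            = if v = 0 then 2 else 1 := by
          intro v; have := hcnt v; rwa [Fin.sum_univ_two] at this
        have h0 := hcnt' 0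
        rw [if_pos rfl] at h0
        by_cases hmem : (0:Fin 4) ∈ ws 0
        · have hB : (ws 1).count 0 = 0 :=
            List.count_eq_zero.mpr (hdisj 0 1 (by decide) 0 hmem)
          exact helper1 (ws 0) (ws 1) (hne 1) (by omega) hB hcnt'
        · have hA0 : (ws 0).count 0 = 0 := List.count_eq_zero.mpr hmem
          have hsum' : ∀ v : Fin 4, (ws 1).count v + (ws 0).count v
              = if v = 0 then 2 else 1 := by
            intro v; rw [add_comm]; exact hcnt' v
          rw [add_comm]
          exact helper1 (ws 1) (ws 0) (hne 0) (by omega) hA0 hsum'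
      calc sInf {x : ℝ | ∃ E, feasP1 (fun v : Fin 4 => if v = 0 then 2 else 1) 2 E
              ∧ mcost cU E = x} ≤ 5 := csInf_le hbdd h5
        _ < 6 := by norm_num
        _ ≤ sInf {x : ℝ | ∃ E, feasP2 (fun v : Fin 4 => if v = 0 then 2 else 1) 2 E
              ∧ mcost cU E = x} := le_csInf hne2 hlow
  · -- P5 vs P6
    refine ⟨4, 2, cU, {0,1}, fun v => if v = 2 then 2 else 1, by decide,
      hsymm, hnn, htri, hloopc, fun v => by dsimp only; split <;> norm_num, ?_, ?_⟩
    · refine ⟨mcost cU (∑ i, walkEdges ((![[2,0,2],[1,3]] : Fin 2 → List (Fin 4)) i)),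
        _, ⟨![[2,0,2],[1,3]], by intro i; refine ⟨?_, ?_, ?_⟩ <;> fin_cases i <;> decide, by decide, rfl, by decide, by decide⟩, rfl⟩
    · have hbdd : BddBelow {x : ℝ | ∃ E, feasP5 {0,1} (fun v : Fin 4 => if v = 2 then 2 else 1)
          2 E ∧ mcost cU E = x} := by
        refine ⟨0, fun x hx => ?_⟩
        obtain ⟨E, _, rfl⟩ := hx
        exact mcost_nonneg E
      have h5 : (5:ℝ) ∈ {x : ℝ | ∃ E, feasP5 {0,1} (fun v : Fin 4 => if v = 2 then 2 else 1)
          2 E ∧ mcost cU E = x} := by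
        refine ⟨∑ i, walkEdges ((![[0,2,3],[1,2]] : Fin 2 → List (Fin 4)) i),
          ⟨![[0,2,3],[1,2]], by intro i; refine ⟨?_, ?_, ?_⟩ <;> fin_cases i <;> decide, by decide, rfl, by decide⟩, ?_⟩
        rw [Fin.sum_univ_two]
        show mcost cU (({s(0,2), s(2,3), s(3,0)} : Multiset (Sym2 (Fin 4)))
          + ({s(1,2), s(2,1)} : Multiset (Sym2 (Fin 4)))) = 5
        simp [mcost, cU]
        norm_num
      have hne6 : {x : ℝ | ∃ E, feasP6 {0,1} (fun v : Fin 4 => if v = 2 then 2 else 1) 2 E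
          ∧ mcost cU E = x}.Nonempty :=
        ⟨mcost cU (∑ i, walkEdges ((![[2,0,2],[1,3]] : Fin 2 → List (Fin 4)) i)),
          _, ⟨![[2,0,2],[1,3]], by intro i; refine ⟨?_, ?_, ?_⟩ <;> fin_cases i <;> decide, by decide, rfl, by decide, by decide⟩, rfl⟩
      have hlow : ∀ x ∈ {x : ℝ | ∃ E, feasP6 {0,1} (fun v : Fin 4 => if v = 2 then 2 else 1)
          2 E ∧ mcost cU E = x}, (6:ℝ) ≤ x := by
        rintro x ⟨E, ⟨ws, hdep, hdinj, rfl, hcnt, hdisj⟩, rfl⟩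
        rw [Fin.sum_univ_two]
        have h2cnt : (ws 0).count 2 + (ws 1).count 2 = 2 := by
          have := hcnt 2 (by decide); rw [Fin.sum_univ_two] at this; simpa using this
        -- helper producing the needed data for tour j (not containing 2)
        have key : ∀ i j : Fin 2, i ≠ j → (2:Fin 4) ∈ ws i →
            (6:ℝ) ≤ mcost cU (walkEdges (ws i) + walkEdges (ws j)) := by
          intro i j hij hmem
          have hnot : (2:Fin 4) ∉ ws j := hdisj i j hij 2 hmem
          have hcj : (ws j).count 2 = 0 := List.count_eq_zero.mpr hnot
          have hci : (ws i).count 2 = 2 := by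
            have h01 : (i = 0 ∧ j = 1) ∨ (i = 1 ∧ j = 0) := by
              fin_cases i <;> fin_cases j <;> simp_all
            rcases h01 with ⟨rfl, rfl⟩ | ⟨rfl, rfl⟩ <;> omega
          obtain ⟨⟨d, hdD, hdi⟩, -, -⟩ := hdep i
          obtain ⟨⟨d', hd'D, hd'j⟩, ⟨v', hv'j, hv'D⟩, -⟩ := hdep j
          have hd2 : d ≠ 2 := by
            intro h; subst h; revert hdD; decide
          have hd'v' : d' ≠ v' := by
            intro h; subst h; exact hv'D hd'D
          exact helper2 (ws i) (ws j) hci d hd2 hdi d' v' hd'v' hd'j hv'j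
        by_cases hmem : (2:Fin 4) ∈ ws 0
        · exact key 0 1 (by decide) hmem
        · have h20 : (ws 0).count 2 = 0 := List.count_eq_zero.mpr hmem
          have : (2:Fin 4) ∈ ws 1 := by
            apply List.count_pos_iff.mp; omega
          rw [add_comm]
          exact key 1 0 (by decide) this
      calc sInf {x : ℝ | ∃ E, feasP5 {0,1} (fun v : Fin 4 => if v = 2 then 2 else 1) 2 E
              ∧ mcost cU E = x} ≤ 5 := csInf_le hbdd h5
        _ < 6 := by norm_num
        _ ≤ sInf {x : ℝ | ∃ E, feasP6 {0,1} (fun v : Fin 4 => if v = 2 then 2 else 1) 2 E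
              ∧ mcost cU E = x} := le_csInf hne6 hlow
end
end

section
/- If r and r' are request vectors with r(v) ≤ r'(v) for all vertices v, and TP and TP' are minimum-cost multigraphs on V with degree exactly 2·r(v), resp. 2·r'(v), at each vertex v (degrees counting self-loops twice, no connectivity required), then cost(TP) ≤ cost(TP'), provided the cost function is nonnegative, symmetric, and satisfies the triangle inequality. -/
open Finset

noncomputable section

variable {V : Type*}

/-- A transportation-problem solution for requests `ρ`: a multigraph with degree exactly
`2·ρ(v)` at every vertex (loops counted twice, no connectivity required). -/
def degFeas [DecidableEq V] (ρ : V → ℕ) (E : Multiset (Sym2 V)) : Prop :=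
  ∀ v, mdeg E v = 2 * ρ v

/-- weight of edge `e` at vertex `v` -/
def degw [DecidableEq V] (v : V) (e : Sym2 V) : ℕ :=
  Sym2.lift ⟨fun a b => (if a = v then 1 else 0) + (if b = v then 1 else 0),
    fun _ _ => add_comm _ _⟩ e

def costw (c : V → V → ℝ) (e : Sym2 V) : ℝ :=
  Sym2.lift ⟨fun a b => (c a b + c b a) / 2, fun _ _ => by ring⟩ e

lemma mdeg_eq [DecidableEq V] (E : Multiset (Sym2 V)) (v : V) :
    mdeg E v = (E.map (degw v)).sum := rfl

lemma mcost_eq (c : V → V → ℝ) (E : Multiset (Sym2 V)) :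
    mcost c E = (E.map (costw c)).sum := rfl

lemma mdeg_cons [DecidableEq V] (e : Sym2 V) (E : Multiset (Sym2 V)) (v : V) :
    mdeg (e ::ₘ E) v = degw v e + mdeg E v := by
  simp [mdeg_eq]

lemma mcost_cons (c : V → V → ℝ) (e : Sym2 V) (E : Multiset (Sym2 V)) :
    mcost c (e ::ₘ E) = costw c e + mcost c E := by
  simp [mcost_eq]

lemma degw_mk [DecidableEq V] (v a b : V) :
    degw v s(a, b) = (if a = v then 1 else 0) + (if b = v then 1 else 0) := rfl

lemma costw_mk (c : V → V → ℝ) (a b : V) :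
    costw c s(a, b) = (c a b + c b a) / 2 := rfl

lemma exists_edge_at [DecidableEq V] {E : Multiset (Sym2 V)} {v : V}
    (h : 0 < mdeg E v) : ∃ a, s(v, a) ∈ E := by
  by_contra hc
  push_neg at hc
  have : mdeg E v = 0 := by
    rw [mdeg_eq]
    refine Multiset.sum_eq_zero ?_
    intro x hx
    rw [Multiset.mem_map] at hx
    obtain ⟨e, heE, rfl⟩ := hx
    induction e using Sym2.ind with
    | _ a b =>
      rw [degw_mk]
      have ha : a ≠ v := by rintro rfl; exact hc b heE
      have hb : b ≠ v := by rintro rfl; exact hc a (Sym2.eq_swap ▸ heE)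
      simp [ha, hb]
  omega

/-- One shortcut step: decrement the request at one vertex with positive request,
without increasing cost. -/
lemma shortcut_step [DecidableEq V] (c : V → V → ℝ)
    (hsymm : ∀ u v, c u v = c v u) (hnonneg : ∀ u v, 0 ≤ c u v)
    (htri : ∀ u v w, c u w ≤ c u v + c v w)
    (ρ : V → ℕ) (E : Multiset (Sym2 V)) (v : V) (hv : 0 < ρ v)
    (hfeas : degFeas ρ E) :
    ∃ E', degFeas (Function.update ρ v (ρ v - 1)) E' ∧ mcost c E' ≤ mcost c E := by
  have hdegv : mdeg E v = 2 * ρ v := hfeas v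
  by_cases hloop : s(v, v) ∈ E
  · -- remove the loop
    refine ⟨E.erase s(v, v), ?_, ?_⟩
    · intro w
      have hE : s(v, v) ::ₘ E.erase s(v, v) = E := Multiset.cons_erase hloop
      have hd : mdeg E w = degw w s(v, v) + mdeg (E.erase s(v, v)) w := by
        rw [← hE, mdeg_cons]; rw [hE]
      rw [degw_mk] at hd
      rcases eq_or_ne w v with rfl | hwv
      · simp only [eq_self_iff_true, if_true] at hd
        rw [Function.update_self]
        omega
      · simp only [if_neg (Ne.symm hwv)] at hd
        rw [Function.update_of_ne hwv]
        have := hfeas w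
        omega
    · have hE : s(v, v) ::ₘ E.erase s(v, v) = E := Multiset.cons_erase hloop
      have hc : mcost c E = costw c s(v, v) + mcost c (E.erase s(v, v)) := by
        rw [← hE, mcost_cons]; rw [hE]
      have : (0:ℝ) ≤ costw c s(v, v) := by
        rw [costw_mk]; have := hnonneg v v; linarith
      linarith
  · -- no loop at v: find two distinct edge-slots at v and shortcut
    have h1 : 0 < mdeg E v := by omega
    obtain ⟨a, ha⟩ := exists_edge_at h1
    have hav : a ≠ v := by rintro rfl; exact hloop ha
    set F1 := E.erase s(v, a) with hF1
    have hE1 : s(v, a) ::ₘ F1 = E := Multiset.cons_erase ha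
    have hd1 : ∀ w, mdeg E w = degw w s(v, a) + mdeg F1 w := by
      intro w; rw [← hE1, mdeg_cons]
    have h2 : 0 < mdeg F1 v := by
      have := hd1 v
      rw [degw_mk] at this
      simp only [eq_self_iff_true, if_true, if_neg hav] at this
      omega
    obtain ⟨b, hb⟩ := exists_edge_at h2
    have hbv : b ≠ v := by
      rintro rfl
      exact hloop (Multiset.mem_of_mem_erase hb)
    set F := F1.erase s(v, b) with hF
    have hE2 : s(v, b) ::ₘ F = F1 := Multiset.cons_erase hb
    have hd2 : ∀ w, mdeg F1 w = degw w s(v, b) + mdeg F w := by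
      intro w; rw [← hE2, mdeg_cons]
    refine ⟨s(a, b) ::ₘ F, ?_, ?_⟩
    · intro w
      have hdw := hfeas w
      rw [hd1 w, hd2 w] at hdw
      rw [mdeg_cons]
      simp only [degw_mk] at hdw ⊢
      rcases eq_or_ne w v with rfl | hwv
      · rw [Function.update_self]
        simp only [eq_self_iff_true, if_true, if_neg hav, if_neg hbv] at hdw ⊢
        omega
      · rw [Function.update_of_ne hwv]
        simp only [if_neg (Ne.symm hwv)] at *
        omega
    · have hc1 : mcost c E = costw c s(v, a) + mcost c F1 := by
        rw [← hE1, mcost_cons]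
      have hc2 : mcost c F1 = costw c s(v, b) + mcost c F := by
        rw [← hE2, mcost_cons]
      rw [mcost_cons, hc1, hc2, costw_mk, costw_mk, costw_mk]
      have t1 : c a b ≤ c a v + c v b := htri a v b
      have e1 : c b a = c a b := hsymm b a
      have e2 : c a v = c v a := hsymm a v
      have e3 : c b v = c v b := hsymm b v
      linarith

lemma shortcut [Fintype V] [DecidableEq V] (c : V → V → ℝ)
    (hsymm : ∀ u v, c u v = c v u) (hnonneg : ∀ u v, 0 ≤ c u v)
    (htri : ∀ u v w, c u w ≤ c u v + c v w) (r : V → ℕ) :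
    ∀ (n : ℕ) (r' : V → ℕ) (E : Multiset (Sym2 V)),
      (∀ v, r v ≤ r' v) → (∑ v, (r' v - r v)) = n → degFeas r' E →
      ∃ E', degFeas r E' ∧ mcost c E' ≤ mcost c E := by
  intro n
  induction n with
  | zero =>
    intro r' E hle hsum hfeas
    refine ⟨E, ?_, le_refl _⟩
    intro w
    have hz : r' w - r w = 0 := by
      by_contra h
      have : 0 < ∑ v, (r' v - r v) :=
        Finset.sum_pos' (fun _ _ => Nat.zero_le _) ⟨w, Finset.mem_univ w, Nat.pos_of_ne_zero h⟩
      omega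
    have : r' w = r w := by have := hle w; omega
    rw [hfeas w, this]
  | succ n ih =>
    intro r' E hle hsum hfeas
    have hpos : 0 < ∑ v, (r' v - r v) := by omega
    obtain ⟨v, -, hv⟩ := Finset.exists_lt_of_sum_lt (f := fun _ => 0)
      (by simpa using hpos)
    have hvlt : r v < r' v := by omega
    obtain ⟨E₁, hE₁feas, hE₁cost⟩ := shortcut_step c hsymm hnonneg htri r' E v
      (by omega) hfeas
    set r'' := Function.update r' v (r' v - 1) with hr''
    have hle'' : ∀ w, r w ≤ r'' w := by
      intro w
      rcases eq_or_ne w v with rfl | hwv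
      · rw [hr'', Function.update_self]; omega
      · rw [hr'', Function.update_of_ne hwv]; exact hle w
    have hsum'' : (∑ w, (r'' w - r w)) = n := by
      have key : ∀ w, (r'' w - r w) = (r' w - r w) - (if w = v then 1 else 0) := by
        intro w
        rcases eq_or_ne w v with rfl | hwv
        · rw [hr'', Function.update_self]; simp; omega
        · rw [hr'', Function.update_of_ne hwv]; simp [hwv]
      calc ∑ w, (r'' w - r w)
          = ∑ w, ((r' w - r w) - (if w = v then 1 else 0)) := by
            exact Finset.sum_congr rfl fun w _ => key w
        _ = n := by
            rw [← Finset.add_sum_erase _ _ (Finset.mem_univ v)] at hsum ⊢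
            have hterm : ∀ w ∈ Finset.univ.erase v,
                (r' w - r w) - (if w = v then 1 else 0) = r' w - r w := by
              intro w hw
              rw [if_neg (Finset.ne_of_mem_erase hw), Nat.sub_zero]
            rw [Finset.sum_congr rfl hterm]
            simp only [eq_self_iff_true, if_true]
            omega
    obtain ⟨E', hE'feas, hE'cost⟩ := ih r'' E₁ hle'' hsum'' hE₁feas
    exact ⟨E', hE'feas, le_trans hE'cost hE₁cost⟩

/-- Monotonicity of the transportation problem: if `r ≤ r'` pointwise and
`TP`, `TP'` are minimum-cost multigraphs with degrees `2·r(v)` resp. `2·r'(v)`, then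
`cost(TP) ≤ cost(TP')` under nonnegative symmetric costs satisfying the triangle inequality. -/
theorem tp_monotone [Fintype V] [DecidableEq V]
    (c : V → V → ℝ) (r r' : V → ℕ) (TP TP' : Multiset (Sym2 V))
    (hsymm : ∀ u v, c u v = c v u)
    (hnonneg : ∀ u v, 0 ≤ c u v)
    (htri : ∀ u v w, c u w ≤ c u v + c v w)
    (hle : ∀ v, r v ≤ r' v)
    (hTPfeas : degFeas r TP)
    (hTPmin : ∀ E, degFeas r E → mcost c TP ≤ mcost c E)
    (hTP'feas : degFeas r' TP')
    (hTP'min : ∀ E, degFeas r' E → mcost c TP' ≤ mcost c E) :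
    mcost c TP ≤ mcost c TP' := by
  obtain ⟨E, hEfeas, hEcost⟩ :=
    shortcut c hsymm hnonneg htri r (∑ v, (r' v - r v)) r' TP' hle rfl hTP'feas
  exact le_trans (hTPmin E hEfeas) hEcost
end
end
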